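/- arXiv:2309.01980 — 4 statements merged into one kernel-verified Lean document; each statement's English description precedes it below -/
import Mathlib

section
/- Let {(x^k, z^k, y^k)} be a sequence generated by the safeguarded implicit augmented Lagrangian algorithm for problem (P) with ε_k → 0. Assume the approximate global optimality condition L_{μ_k}(x^k, ŷ^k) ≤ L_{μ_k}(x, ŷ^k) + ε_k for all x ∈ ℝ^n and all k, that the feasible set of (P) is nonempty, and that dom g is closed. Then limsup_{k→∞} ( f(x^k) + g(z^k) ) ≤ φ(x) for every feasible x. Moreover, every accumulation point x̄ of {x^k} is a global minimizer of (P), and for any infinite index set K ⊆ ℕ with x^k → x̄ along K one also has z^k → c(x̄) and f(x^k) + g(z^k) → φ(x̄) along K. -/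
/-!
Testing the approximate global optimality of `x^k` against any `x`, and evaluating the Moreau
envelope at its prox point `z^k`, gives `f(x^k) + g(z^k) + q_k ≤ φ(x) + ε_k` with
`q_k = ‖c(x^k) - z^k‖² / (2μ_k) + ⟪c(x^k) - z^k, ŷ^k⟫`. The penalty update forces `μ_k → 0` or a
geometric decrease of `‖c(x^k) - z^k‖`; since `ŷ^k` stays bounded, in both cases `min(q_k, 0) → 0`,
which is the limsup bound. Along a subsequence with `x^k → x̄`, the same inequality together with
prox-boundedness of `g` forces `z^k - c(x^k) → 0`, so `z^k → c(x̄)`, and lower semicontinuity of `g`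
bounds `φ(x̄)` by the liminf of `f(x^k) + g(z^k)`: this squeezes everything.
-/

open Filter Topology Bornology

noncomputable section

/-- Euclidean space `ℝ^d`. -/
abbrev Euc (d : ℕ) := EuclideanSpace ℝ (Fin d)

namespace Paper

variable {n m : ℕ}

/-- The effective domain of an extended-real-valued function. -/
def edom (g : Euc m → EReal) : Set (Euc m) := {z | g z < ⊤}

/-- `g` maps into `ℝ ∪ {∞}` and is proper (its domain is nonempty). -/
def ProperFn (g : Euc m → EReal) : Prop := (∀ z, g z ≠ ⊥) ∧ ∃ z, g z < ⊤

/-- `z ↦ g z + ‖z‖²/(2μ)` is bounded below. -/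
def ProxBoundedWith (g : Euc m → EReal) (μ : ℝ) : Prop :=
  ∃ b : ℝ, ∀ z, (b : EReal) ≤ g z + ((‖z‖ ^ 2 / (2 * μ) : ℝ) : EReal)

/-- `g` is prox-bounded. -/
def ProxBounded (g : Euc m → EReal) : Prop := ∃ μ : ℝ, 0 < μ ∧ ProxBoundedWith g μ

/-- `0 < μ < μ_g`, where `μ_g` is the threshold of prox-boundedness of `g`. -/
def BelowThreshold (g : Euc m → EReal) (μ : ℝ) : Prop :=
  0 < μ ∧ ∃ μ' : ℝ, μ < μ' ∧ ProxBoundedWith g μ'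

/-- The tangent cone to `Ω` at `wbar`. -/
def tangentCone {E : Type*} [NormedAddCommGroup E] [NormedSpace ℝ E]
    (Ω : Set E) (wbar : E) : Set E :=
  {v | ∃ (t : ℕ → ℝ) (w : ℕ → E), (∀ k, 0 < t k) ∧ Tendsto t atTop (𝓝 0) ∧
        Tendsto w atTop (𝓝 v) ∧ ∀ k, wbar + t k • w k ∈ Ω}

/-- The regular (Fréchet) subdifferential of `g` at `zbar`. -/
def regSubdiff (g : Euc m → EReal) (zbar : Euc m) : Set (Euc m) :=
  {v | 0 ≤ liminf (fun z : Euc m =>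
      (g z - g zbar - ((inner ℝ v (z - zbar) : ℝ) : EReal)) / ((‖z - zbar‖ : ℝ) : EReal))
      (𝓝[≠] zbar)}

/-- The limiting (Mordukhovich) subdifferential of `g` at `zbar`. -/
def limSubdiff (g : Euc m → EReal) (zbar : Euc m) : Set (Euc m) :=
  {v | ∃ zs vs : ℕ → Euc m, Tendsto zs atTop (𝓝 zbar) ∧
        Tendsto (fun k => g (zs k)) atTop (𝓝 (g zbar)) ∧
        Tendsto vs atTop (𝓝 v) ∧ ∀ k, vs k ∈ regSubdiff g (zs k)}

/-- The subderivative `dg(zbar)(v)`. -/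
def subderiv (g : Euc m → EReal) (zbar v : Euc m) : EReal :=
  liminf (fun p : ℝ × Euc m => (g (zbar + p.1 • p.2) - g zbar) / ((p.1 : ℝ) : EReal))
    ((𝓝[>] (0 : ℝ)) ×ˢ 𝓝 v)

/-- The second subderivative `d²g(zbar, ybar)(v)`. -/
def secondSubderiv (g : Euc m → EReal) (zbar ybar v : Euc m) : EReal :=
  liminf (fun p : ℝ × Euc m =>
      (g (zbar + p.1 • p.2) - g zbar - ((p.1 * (inner ℝ ybar p.2 : ℝ) : ℝ) : EReal)) /
        ((p.1 ^ 2 / 2 : ℝ) : EReal))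
    ((𝓝[>] (0 : ℝ)) ×ˢ 𝓝 v)

/-- The Lagrangian `L(·, y) = f + ⟨y, c ·⟩` of (P). -/
def LagFn (f : Euc n → ℝ) (c : Euc n → Euc m) (y : Euc m) : Euc n → ℝ :=
  fun x => f x + (inner ℝ y (c x) : ℝ)

/-- `∇ₓL(xbar, y) = 0`. -/
def gradLagZero (f : Euc n → ℝ) (c : Euc n → Euc m) (xbar : Euc n) (y : Euc m) : Prop :=
  fderiv ℝ (LagFn f c y) xbar = 0

/-- The set `Λ(xbar)` of Lagrange multipliers of the M-stationarity system at `xbar`. -/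
def Lambda (f : Euc n → ℝ) (c : Euc n → Euc m) (g : Euc m → EReal) (xbar : Euc n) :
    Set (Euc m) :=
  {y | gradLagZero f c xbar y ∧ y ∈ limSubdiff g (c xbar)}

/-- `∇²ₓₓL(xbar, y)[u, w]`. -/
def hessLag (f : Euc n → ℝ) (c : Euc n → Euc m) (xbar : Euc n) (y : Euc m) (u w : Euc n) : ℝ :=
  iteratedFDeriv ℝ 2 (LagFn f c y) xbar ![u, w]

/-- The critical cone `C(xbar)` of (P). -/
def critCone (f : Euc n → ℝ) (c : Euc n → Euc m) (g : Euc m → EReal) (xbar : Euc n) :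
    Set (Euc n) :=
  {u | ((fderiv ℝ f xbar u : ℝ) : EReal) + subderiv g (c xbar) (fderiv ℝ c xbar u) ≤ 0}

/-- The directional multiplier set `Λ(xbar, u)`. -/
def dirLambda (f : Euc n → ℝ) (c : Euc n → Euc m) (g : Euc m → EReal) (xbar : Euc n)
    (u : Euc n) : Set (Euc m) :=
  {y | gradLagZero f c xbar y ∧
    subderiv g (c xbar) (fderiv ℝ c xbar u) = ((inner ℝ y (fderiv ℝ c xbar u) : ℝ) : EReal) ∧
    secondSubderiv g (c xbar) y (fderiv ℝ c xbar u) ≠ ⊥}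

/-- The second-order sufficient condition (SOSC) for (P) at `xbar`. -/
def SOSC (f : Euc n → ℝ) (c : Euc n → Euc m) (g : Euc m → EReal) (xbar : Euc n) : Prop :=
  ∀ u ∈ critCone f c g xbar, u ≠ 0 → ∃ y ∈ dirLambda f c g xbar u,
    0 < ((hessLag f c xbar y u u : ℝ) : EReal) + secondSubderiv g (c xbar) y (fderiv ℝ c xbar u)

/-- The stationarity residual `Θ(x, z, y)`; the distance to the (possibly empty)
subdifferential is taken in `EReal` via an infimum. -/
def Theta (f : Euc n → ℝ) (c : Euc n → Euc m) (g : Euc m → EReal)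
    (x : Euc n) (z y : Euc m) : EReal :=
  ((‖fderiv ℝ (LagFn f c y) x‖ + ‖c x - z‖ : ℝ) : EReal) +
    ⨅ v ∈ limSubdiff g z, ((‖y - v‖ : ℝ) : EReal)

/-- The graphical derivative `D(∂g)(zbar, ybar)(v)` of the limiting subdifferential mapping. -/
def gDeriv (g : Euc m → EReal) (zbar ybar v : Euc m) : Set (Euc m) :=
  {η | (v, η) ∈ tangentCone {p : Euc m × Euc m | p.2 ∈ limSubdiff g p.1} (zbar, ybar)}

/-- The Moreau envelope `g^μ(w)`. -/
def moreau (g : Euc m → EReal) (μ : ℝ) (w : Euc m) : EReal :=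
  ⨅ z, (g z + ((‖z - w‖ ^ 2 / (2 * μ) : ℝ) : EReal))

/-- The augmented Lagrangian `L_μ(x, y)` of (P). -/
def ALfun (f : Euc n → ℝ) (c : Euc n → Euc m) (g : Euc m → EReal) (μ : ℝ)
    (x : Euc n) (y : Euc m) : EReal :=
  (f x : EReal) + moreau g μ (c x + μ • y) - ((μ / 2 * ‖y‖ ^ 2 : ℝ) : EReal)

/-- `xbar` is a strict local minimizer of (P). -/
def StrictLocalMin (f : Euc n → ℝ) (c : Euc n → Euc m) (g : Euc m → EReal)
    (xbar : Euc n) : Prop :=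
  c xbar ∈ edom g ∧ ∃ ρ : ℝ, 0 < ρ ∧ ∀ x : Euc n, ‖x - xbar‖ ≤ ρ → c x ∈ edom g → x ≠ xbar →
    (f xbar : EReal) + g (c xbar) < (f x : EReal) + g (c x)

open Classical in
/-- A sequence generated by the safeguarded implicit augmented Lagrangian method
(Algorithm 4.1) for problem (P). -/
structure ALMSeq (n m : ℕ) (f : Euc n → ℝ) (c : Euc n → Euc m) (g : Euc m → EReal) where
  /-- sufficient-decrease parameter -/
  θ : ℝ
  /-- penalty-reduction parameter -/
  κ : ℝ
  hθ : 0 < θ ∧ θ < 1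
  hκ : 0 < κ ∧ κ < 1
  /-- safeguarding set -/
  Y : Set (Euc m)
  hYne : Y.Nonempty
  hYbdd : IsBounded Y
  /-- primal iterates -/
  x : ℕ → Euc n
  /-- auxiliary (certificate) iterates -/
  z : ℕ → Euc m
  /-- safeguarded multiplier estimates -/
  yhat : ℕ → Euc m
  /-- multiplier iterates -/
  y : ℕ → Euc m
  /-- penalty parameters -/
  μ : ℕ → ℝ
  /-- inner tolerances -/
  ε : ℕ → ℝ
  hyhatY : ∀ k, yhat k ∈ Y
  hεnn : ∀ k, 0 ≤ ε k
  hμthr : ∀ k, BelowThreshold g (μ k)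
  /-- `z k ∈ prox_{μ_k g}(c(x^k) + μ_k ŷ^k)` -/
  hprox : ∀ k, ∀ w : Euc m,
    g (z k) + ((‖z k - (c (x k) + μ k • yhat k)‖ ^ 2 / (2 * μ k) : ℝ) : EReal) ≤
      g w + ((‖w - (c (x k) + μ k • yhat k)‖ ^ 2 / (2 * μ k) : ℝ) : EReal)
  /-- dual update rule -/
  hy : ∀ k, y k = yhat k + (μ k)⁻¹ • (c (x k) - z k)
  /-- approximate stationarity for the subproblem, `‖∇ₓL^S_{μ_k}(x^k,z^k,ŷ^k)‖ ≤ ε_k` -/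
  hdual : ∀ k, ‖fderiv ℝ (LagFn f c (y k)) (x k)‖ ≤ ε k
  /-- penalty update rule -/
  hμupd : ∀ k, μ (k + 1) =
    if k = 0 ∨ ‖c (x k) - z k‖ ≤ θ * ‖c (x (k - 1)) - z (k - 1)‖ then μ k else κ * μ k

lemma ProxBoundedWith.ne_bot {g : Euc m → EReal} {μ : ℝ} (h : ProxBoundedWith g μ) (z : Euc m) :
    g z ≠ ⊥ := by
  obtain ⟨b, hb⟩ := h
  intro hz
  have hbz := hb z
  rw [hz, EReal.bot_add] at hbz
  exact EReal.coe_ne_bot b (le_bot_iff.1 hbz)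

lemma moreau_le (g : Euc m → EReal) (μ : ℝ) (w z : Euc m) :
    moreau g μ w ≤ g z + ((‖z - w‖ ^ 2 / (2 * μ) : ℝ) : EReal) :=
  iInf_le _ z

lemma moreau_eq_of_forall_le {g : Euc m → EReal} {μ : ℝ} {w z : Euc m}
    (h : ∀ z', g z + ((‖z - w‖ ^ 2 / (2 * μ) : ℝ) : EReal) ≤
      g z' + ((‖z' - w‖ ^ 2 / (2 * μ) : ℝ) : EReal)) :
    moreau g μ w = g z + ((‖z - w‖ ^ 2 / (2 * μ) : ℝ) : EReal) :=
  le_antisymm (moreau_le g μ w z) (le_iInf h)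

lemma ALfun_le (f : Euc n → ℝ) (c : Euc n → Euc m) (g : Euc m → EReal) {μ : ℝ} (hμ : 0 < μ)
    (x : Euc n) (y : Euc m) : ALfun f c g μ x y ≤ f x + g (c x) := by
  have hshift : ‖c x - (c x + μ • y)‖ ^ 2 / (2 * μ) = μ / 2 * ‖y‖ ^ 2 := by
    rw [sub_add_cancel_left, norm_neg, norm_smul, Real.norm_of_nonneg hμ.le]
    field_simp
  calc ALfun f c g μ x y
      ≤ f x + (g (c x) + ((μ / 2 * ‖y‖ ^ 2 : ℝ) : EReal)) - ((μ / 2 * ‖y‖ ^ 2 : ℝ) : EReal) := by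
        refine EReal.sub_le_sub (add_le_add le_rfl ?_) le_rfl
        simpa only [hshift] using moreau_le g μ (c x + μ • y) (c x)
    _ = f x + g (c x) := by rw [← add_assoc, EReal.add_sub_cancel_right]

lemma le_liminf_add_of_tendsto {X Y ι : Type*} [TopologicalSpace X] [TopologicalSpace Y]
    {f : X → ℝ} {g : Y → EReal} (hf : Continuous f) (hg : LowerSemicontinuous g)
    {l : Filter ι} {u : ι → X} {v : ι → Y} {a : X} {b : Y}
    (hu : Tendsto u l (𝓝 a)) (hv : Tendsto v l (𝓝 b)) :
    (f a : EReal) + g b ≤ liminf (fun i => (f (u i) : EReal) + g (v i)) l := by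
  have hlsc : LowerSemicontinuous fun p : X × Y => (f p.1 : EReal) + g p.2 :=
    LowerSemicontinuous.add'
      (continuous_coe_real_ereal.comp (hf.comp continuous_fst)).lowerSemicontinuous
      (hg.comp continuous_snd)
      fun p => EReal.continuousAt_add (Or.inl (EReal.coe_ne_top _)) (Or.inl (EReal.coe_ne_bot _))
  exact (LowerSemicontinuousAt.le_liminf (hlsc (a, b))).trans
    (hu.prodMk_nhds hv).liminf_le_liminf_comp

lemma le_mul_add_sqrt_of_sq_le {W a C M : ℝ} (ha : 0 ≤ a) (hM : 0 ≤ M)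
    (h : W ^ 2 ≤ a * (C + M * W)) : W ≤ a * M + √(a * max C 0) := by
  by_contra! hlt
  set s := √(a * max C 0)
  have hs : 0 ≤ s := Real.sqrt_nonneg _
  have hss : s * s = a * max C 0 := Real.mul_self_sqrt (mul_nonneg ha (le_max_right C 0))
  have hW0 : 0 < W := by nlinarith [mul_nonneg ha hM]
  nlinarith [mul_lt_mul_of_pos_left hlt hW0, mul_le_mul_of_nonneg_left hlt.le hs,
    mul_le_mul_of_nonneg_left (le_max_left C 0) ha, mul_nonneg hs (mul_nonneg ha hM)]

lemma tendsto_zero_of_sq_le {V a C : ℕ → ℝ} {M C₀ : ℝ} (hV : ∀ k, 0 ≤ V k) (ha : ∀ k, 0 ≤ a k)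
    (hM : 0 ≤ M) (ha0 : Tendsto a atTop (𝓝 0)) (hC : Tendsto C atTop (𝓝 C₀))
    (h : ∀ᶠ k in atTop, V k ^ 2 ≤ a k * (C k + M * V k)) : Tendsto V atTop (𝓝 0) := by
  have hbound : Tendsto (fun k => a k * M + √(a k * max (C k) 0)) atTop (𝓝 0) := by
    simpa only [zero_mul, Real.sqrt_zero, add_zero] using
      (ha0.mul_const M).add ((ha0.mul (hC.max (tendsto_const_nhds (x := (0 : ℝ))))).sqrt)
  refine tendsto_of_tendsto_of_tendsto_of_le_of_le' tendsto_const_nhds hbound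
    (Eventually.of_forall hV) ?_
  filter_upwards [h] with k hk
  exact le_mul_add_sqrt_of_sq_le (ha k) hM hk

namespace ALMSeq

variable {f : Euc n → ℝ} {c : Euc n → Euc m} {g : Euc m → EReal} (A : ALMSeq n m f c g)

def residual (k : ℕ) : ℝ := ‖c (A.x k) - A.z k‖

def penalty (k : ℕ) : ℝ :=
  A.residual k ^ 2 / (2 * A.μ k) + inner ℝ (c (A.x k) - A.z k) (A.yhat k)

def ApproxGlobalMin : Prop :=
  ∀ k, ∀ x : Euc n,
    ALfun f c g (A.μ k) (A.x k) (A.yhat k) ≤ ALfun f c g (A.μ k) x (A.yhat k) + (A.ε k : EReal)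

lemma μ_pos (k : ℕ) : 0 < A.μ k := (A.hμthr k).1

lemma residual_nonneg (k : ℕ) : 0 ≤ A.residual k := norm_nonneg _

lemma g_ne_bot (A : ALMSeq n m f c g) (z : Euc m) : g z ≠ ⊥ := by
  obtain ⟨-, μ', -, h⟩ := A.hμthr 0
  exact h.ne_bot z

lemma exists_norm_yhat_le : ∃ M, 0 ≤ M ∧ ∀ k, ‖A.yhat k‖ ≤ M := by
  obtain ⟨M, hM⟩ := isBounded_iff_forall_norm_le.1 A.hYbdd
  exact ⟨M, (norm_nonneg _).trans (hM _ (A.hyhatY 0)), fun k => hM _ (A.hyhatY k)⟩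

lemma μ_antitone : Antitone A.μ := by
  refine antitone_nat_of_succ_le fun k => ?_
  rw [A.hμupd k]
  split_ifs
  · exact le_rfl
  · nlinarith [A.μ_pos k, A.hκ.2]

lemma tendsto_μ_zero_or_tendsto_residual_zero :
    Tendsto A.μ atTop (𝓝 0) ∨ Tendsto A.residual atTop (𝓝 0) := by
  by_cases hred : ∃ᶠ k in atTop, A.μ (k + 1) ≠ A.μ k
  · left
    have hlim := tendsto_atTop_ciInf A.μ_antitone ⟨0, fun _ ⟨k, hk⟩ => hk ▸ (A.μ_pos k).le⟩
    set L := ⨅ k, A.μ k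
    have hfix : L = A.κ * L := by
      refine tendsto_nhds_unique_of_frequently_eq (hlim.comp (tendsto_add_atTop_nat 1))
        (hlim.const_mul A.κ) (hred.mono fun k hk => ?_)
      have hupd := A.hμupd k
      rw [if_neg fun hcond => hk (by rw [hupd, if_pos hcond])] at hupd
      exact hupd
    have hL : L = 0 := by nlinarith [A.hκ.2]
    rwa [hL] at hlim
  · right
    push Not at hred
    refine (summable_of_ratio_norm_eventually_le A.hθ.2 ?_).tendsto_atTop_zero
    filter_upwards [(tendsto_add_atTop_nat 1).eventually hred] with k hk
    have hupd := A.hμupd (k + 1)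
    simp only [Nat.add_sub_cancel, Nat.add_eq_zero_iff, one_ne_zero, and_false, false_or] at hupd
    rw [Real.norm_of_nonneg (A.residual_nonneg _), Real.norm_of_nonneg (A.residual_nonneg _)]
    split_ifs at hupd with hcond
    · exact hcond
    · nlinarith [A.μ_pos (k + 1), A.hκ.2]

lemma ALfun_eq (k : ℕ) :
    ALfun f c g (A.μ k) (A.x k) (A.yhat k) = f (A.x k) + g (A.z k) + A.penalty k := by
  have hμ := A.μ_pos k
  have hsq : ‖A.z k - (c (A.x k) + A.μ k • A.yhat k)‖ ^ 2 / (2 * A.μ k) -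
      A.μ k / 2 * ‖A.yhat k‖ ^ 2 = A.penalty k := by
    rw [penalty, residual, show A.z k - (c (A.x k) + A.μ k • A.yhat k) =
      -((c (A.x k) - A.z k) + A.μ k • A.yhat k) by abel, norm_neg, norm_add_sq_real,
      real_inner_smul_right, norm_smul, Real.norm_of_nonneg hμ.le]
    field_simp
    ring
  rw [ALfun, moreau_eq_of_forall_le (A.hprox k), ← hsq, EReal.coe_sub]
  simp only [sub_eq_add_neg, add_assoc]

lemma sub_le_penalty {M : ℝ} {k : ℕ} (hM : ‖A.yhat k‖ ≤ M) :
    A.residual k ^ 2 / (2 * A.μ k) - M * A.residual k ≤ A.penalty k := by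
  have hinner : -(M * A.residual k) ≤ inner ℝ (c (A.x k) - A.z k) (A.yhat k) := by
    have hcs : |inner ℝ (c (A.x k) - A.z k) (A.yhat k)| ≤ A.residual k * ‖A.yhat k‖ :=
      abs_real_inner_le_norm _ _
    nlinarith [neg_abs_le (inner ℝ (c (A.x k) - A.z k) (A.yhat k)),
      mul_le_mul_of_nonneg_left hM (A.residual_nonneg k)]
  rw [penalty]
  linarith

lemma neg_le_penalty {M : ℝ} {k : ℕ} (hM : ‖A.yhat k‖ ≤ M) :
    -(A.μ k / 2 * M ^ 2) ≤ A.penalty k := by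
  have hμ := A.μ_pos k
  have hsq : 0 ≤ (A.residual k - A.μ k * M) ^ 2 / (2 * A.μ k) := by positivity
  have hexp : (A.residual k - A.μ k * M) ^ 2 / (2 * A.μ k) =
      A.residual k ^ 2 / (2 * A.μ k) - M * A.residual k + A.μ k / 2 * M ^ 2 := by
    field_simp
    ring
  linarith [A.sub_le_penalty hM]

lemma tendsto_min_penalty_zero : Tendsto (fun k => min (A.penalty k) 0) atTop (𝓝 0) := by
  obtain ⟨M, hM, hMy⟩ := A.exists_norm_yhat_le
  have hle : ∀ k, min (A.penalty k) 0 ≤ 0 := fun k => min_le_right _ _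
  rcases A.tendsto_μ_zero_or_tendsto_residual_zero with hμ | hV
  · have hlow : Tendsto (fun k => -(A.μ k / 2 * M ^ 2)) atTop (𝓝 0) := by
      simpa using ((hμ.div_const 2).mul_const (M ^ 2)).neg
    refine tendsto_of_tendsto_of_tendsto_of_le_of_le hlow tendsto_const_nhds
      (fun k => le_min (A.neg_le_penalty (hMy k)) ?_) hle
    nlinarith [A.μ_pos k]
  · have hlow : Tendsto (fun k => -(M * A.residual k)) atTop (𝓝 0) := by
      simpa using (hV.const_mul M).neg
    refine tendsto_of_tendsto_of_tendsto_of_le_of_le hlow tendsto_const_nhds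
      (fun k => le_min ?_ (by nlinarith [A.residual_nonneg k])) hle
    have hq : 0 ≤ A.residual k ^ 2 / (2 * A.μ k) := by have := A.μ_pos k; positivity
    linarith [A.sub_le_penalty (hMy k)]

variable {A}

lemma value_add_penalty_le (hA : A.ApproxGlobalMin) (k : ℕ) (x : Euc n) :
    (f (A.x k) : EReal) + g (A.z k) + A.penalty k ≤ f x + g (c x) + A.ε k := by
  rw [← A.ALfun_eq k]
  exact (hA k x).trans (add_le_add (ALfun_le f c g (A.μ_pos k) x (A.yhat k)) le_rfl)

lemma value_le (hA : A.ApproxGlobalMin) (k : ℕ) (x : Euc n) :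
    (f (A.x k) : EReal) + g (A.z k) ≤
      f x + g (c x) + ((A.ε k - min (A.penalty k) 0 : ℝ) : EReal) := by
  have h := (add_le_add le_rfl (EReal.coe_le_coe_iff.2 (min_le_left (A.penalty k) 0))).trans
    (value_add_penalty_le hA k x)
  calc (f (A.x k) : EReal) + g (A.z k)
      = f (A.x k) + g (A.z k) + (min (A.penalty k) 0 : ℝ) - (min (A.penalty k) 0 : ℝ) :=
        EReal.add_sub_cancel_right.symm
    _ ≤ f x + g (c x) + A.ε k - (min (A.penalty k) 0 : ℝ) := EReal.sub_le_sub h le_rfl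
    _ = f x + g (c x) + ((A.ε k - min (A.penalty k) 0 : ℝ) : EReal) := by
        rw [EReal.coe_sub, sub_eq_add_neg, sub_eq_add_neg, add_assoc]

lemma limsup_value_le (hA : A.ApproxGlobalMin) (hε : Tendsto A.ε atTop (𝓝 0)) {x : Euc n}
    (hx : c x ∈ edom g) :
    limsup (fun k => (f (A.x k) : EReal) + g (A.z k)) atTop ≤ f x + g (c x) := by
  rw [← EReal.coe_toReal hx.ne (A.g_ne_bot _)]
  have ht : Tendsto (fun k => A.ε k - min (A.penalty k) 0) atTop (𝓝 0) := by
    simpa using hε.sub A.tendsto_min_penalty_zero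
  calc limsup (fun k => (f (A.x k) : EReal) + g (A.z k)) atTop
      ≤ limsup (fun k => ((f x + (g (c x)).toReal + (A.ε k - min (A.penalty k) 0) : ℝ) : EReal))
          atTop := by
        refine limsup_le_limsup (Eventually.of_forall fun k => ?_)
        simpa only [EReal.coe_add, EReal.coe_toReal hx.ne (A.g_ne_bot _)] using value_le hA k x
    _ = ((f x + (g (c x)).toReal : ℝ) : EReal) := by
        refine Tendsto.limsup_eq (EReal.tendsto_coe.2 ?_)
        simpa using tendsto_const_nhds.add ht
    _ = f x + (g (c x)).toReal := EReal.coe_add _ _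

/-- The estimate behind `z^k - c(x^k) → 0` when `μ_k → 0`: prox-boundedness bounds `g(z^k)` below
by `b - ‖z^k‖² / (2μ')`, which is absorbed by the term `‖c(x^k) - z^k‖² / (2μ_k)` of the penalty
once `4 μ_k ≤ μ'`. -/
lemma residual_sq_le (hA : A.ApproxGlobalMin) {x₀ : Euc n} (hx₀ : c x₀ ∈ edom g)
    {μ' b M : ℝ} (hμ' : 0 < μ') (hb : ∀ z, (b : EReal) ≤ g z + ((‖z‖ ^ 2 / (2 * μ') : ℝ) : EReal))
    (hM : ∀ k, ‖A.yhat k‖ ≤ M) {k : ℕ} (hk : 4 * A.μ k ≤ μ') :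
    A.residual k ^ 2 ≤ 4 * A.μ k * (f x₀ + (g (c x₀)).toReal + A.ε k - f (A.x k) - b +
      ‖c (A.x k)‖ ^ 2 / μ' + M * A.residual k) := by
  have hμ := A.μ_pos k
  set V := A.residual k
  have hvalue : f (A.x k) + (b - ‖A.z k‖ ^ 2 / (2 * μ')) + A.penalty k ≤
      f x₀ + (g (c x₀)).toReal + A.ε k := by
    have hgz : ((b - ‖A.z k‖ ^ 2 / (2 * μ') : ℝ) : EReal) ≤ g (A.z k) := by
      rw [EReal.coe_sub]
      exact EReal.sub_le_of_le_add (hb _)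
    have h := (add_le_add (add_le_add le_rfl hgz) le_rfl).trans (value_add_penalty_le hA k x₀)
    rw [← EReal.coe_toReal hx₀.ne (A.g_ne_bot _)] at h
    exact_mod_cast h
  have hz : ‖A.z k‖ ≤ ‖c (A.x k)‖ + V := by
    simpa [V, residual] using norm_sub_le (c (A.x k)) (c (A.x k) - A.z k)
  have hz2 : ‖A.z k‖ ^ 2 / (2 * μ') ≤ ‖c (A.x k)‖ ^ 2 / μ' + V ^ 2 / (4 * A.μ k) := by
    have h1 : ‖A.z k‖ ^ 2 ≤ 2 * ‖c (A.x k)‖ ^ 2 + 2 * V ^ 2 := by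
      nlinarith [norm_nonneg (A.z k), sq_nonneg (‖c (A.x k)‖ - V)]
    have h2 : V ^ 2 / μ' ≤ V ^ 2 / (4 * A.μ k) :=
      div_le_div_of_nonneg_left (sq_nonneg _) (by positivity) hk
    calc ‖A.z k‖ ^ 2 / (2 * μ') ≤ (2 * ‖c (A.x k)‖ ^ 2 + 2 * V ^ 2) / (2 * μ') := by gcongr
      _ = ‖c (A.x k)‖ ^ 2 / μ' + V ^ 2 / μ' := by field_simp
      _ ≤ _ := by gcongr
  have hhalf : V ^ 2 / (2 * A.μ k) = V ^ 2 / (4 * A.μ k) + V ^ 2 / (4 * A.μ k) := by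
    field_simp; ring
  rw [← div_le_iff₀' (by positivity)]
  linarith [A.sub_le_penalty (hM k)]

lemma tendsto_residual_comp (hA : A.ApproxGlobalMin) (hε : Tendsto A.ε atTop (𝓝 0))
    {x₀ : Euc n} (hx₀ : c x₀ ∈ edom g) (hf : Continuous f) (hc : Continuous c)
    {K : ℕ → ℕ} (hK : Tendsto K atTop atTop) {xbar : Euc n}
    (hxK : Tendsto (fun k => A.x (K k)) atTop (𝓝 xbar)) :
    Tendsto (fun k => A.residual (K k)) atTop (𝓝 0) := by
  rcases A.tendsto_μ_zero_or_tendsto_residual_zero with hμ | hV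
  · obtain ⟨-, μ', hμ', b, hb⟩ := A.hμthr 0
    have hμ'pos : 0 < μ' := (A.μ_pos 0).trans hμ'
    obtain ⟨M, hM, hMy⟩ := A.exists_norm_yhat_le
    have hμK := hμ.comp hK
    have hC : Tendsto (fun k => f x₀ + (g (c x₀)).toReal + A.ε (K k) - f (A.x (K k)) - b +
        ‖c (A.x (K k))‖ ^ 2 / μ') atTop
        (𝓝 (f x₀ + (g (c x₀)).toReal + 0 - f xbar - b + ‖c xbar‖ ^ 2 / μ')) :=
      (((tendsto_const_nhds.add (hε.comp hK)).sub ((hf.tendsto xbar).comp hxK)).sub_const b).add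
        ((((hc.tendsto xbar).comp hxK).norm.pow 2).div_const μ')
    refine tendsto_zero_of_sq_le (a := fun k => 4 * A.μ (K k)) (fun k => A.residual_nonneg _)
      (fun k => by linarith [A.μ_pos (K k)]) hM (by simpa using hμK.const_mul 4) hC ?_
    filter_upwards [hμK.eventually (gt_mem_nhds (by positivity : 0 < μ' / 4))] with k hk
    exact residual_sq_le hA hx₀ hμ'pos hb hMy (by simp only [Function.comp] at hk; linarith)
  · exact hV.comp hK

lemma tendsto_z_comp_of_tendsto_residual (hc : Continuous c) {K : ℕ → ℕ} {xbar : Euc n}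
    (hxK : Tendsto (fun k => A.x (K k)) atTop (𝓝 xbar))
    (hV : Tendsto (fun k => A.residual (K k)) atTop (𝓝 0)) :
    Tendsto (fun k => A.z (K k)) atTop (𝓝 (c xbar)) := by
  have hgap : Tendsto (fun k => c (A.x (K k)) - A.z (K k)) atTop (𝓝 0) :=
    tendsto_zero_iff_norm_tendsto_zero.2 hV
  simpa using ((hc.tendsto xbar).comp hxK).sub hgap

end ALMSeq

theorem statement12_general {n m : ℕ}
    (f : Euc n → ℝ) (c : Euc n → Euc m) (g : Euc m → EReal)
    (hf : ContDiff ℝ 2 f) (hc : ContDiff ℝ 2 c)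
    (hglsc : LowerSemicontinuous g)
    (A : ALMSeq n m f c g)
    (hε0 : Tendsto A.ε atTop (𝓝 0))
    (hglobal : ∀ k, ∀ x : Euc n,
      ALfun f c g (A.μ k) (A.x k) (A.yhat k) ≤
        ALfun f c g (A.μ k) x (A.yhat k) + (A.ε k : EReal))
    (hfeas : ∃ x : Euc n, c x ∈ edom g) :
    (∀ x : Euc n, c x ∈ edom g →
      limsup (fun k => (f (A.x k) : EReal) + g (A.z k)) atTop ≤ (f x : EReal) + g (c x)) ∧
    (∀ (xbar : Euc n) (K : ℕ → ℕ), StrictMono K →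
      Tendsto (fun k => A.x (K k)) atTop (𝓝 xbar) →
        c xbar ∈ edom g ∧
        (∀ x : Euc n, (f xbar : EReal) + g (c xbar) ≤ (f x : EReal) + g (c x)) ∧
        Tendsto (fun k => A.z (K k)) atTop (𝓝 (c xbar)) ∧
        Tendsto (fun k => (f (A.x (K k)) : EReal) + g (A.z (K k))) atTop
          (𝓝 ((f xbar : EReal) + g (c xbar)))) := by
  obtain ⟨x₀, hx₀⟩ := hfeas
  have hlimsup : ∀ x, c x ∈ edom g →
      limsup (fun k => (f (A.x k) : EReal) + g (A.z k)) atTop ≤ f x + g (c x) :=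
    fun x hx => ALMSeq.limsup_value_le hglobal hε0 hx
  refine ⟨hlimsup, fun xbar K hK hxK => ?_⟩
  have hKtop := hK.tendsto_atTop
  have hzK : Tendsto (fun k => A.z (K k)) atTop (𝓝 (c xbar)) :=
    A.tendsto_z_comp_of_tendsto_residual hc.continuous hxK
      (ALMSeq.tendsto_residual_comp hglobal hε0 hx₀ hf.continuous hc.continuous hKtop hxK)
  have hlow : (f xbar : EReal) + g (c xbar) ≤
      liminf (fun k => (f (A.x (K k)) : EReal) + g (A.z (K k))) atTop :=
    le_liminf_add_of_tendsto hf.continuous hglsc hxK hzK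
  have hup : ∀ x, c x ∈ edom g →
      limsup (fun k => (f (A.x (K k)) : EReal) + g (A.z (K k))) atTop ≤ f x + g (c x) :=
    fun x hx => hKtop.limsup_comp_le_limsup.trans (hlimsup x hx)
  have hmin : ∀ x, c x ∈ edom g → (f xbar : EReal) + g (c xbar) ≤ f x + g (c x) :=
    fun x hx => hlow.trans ((liminf_le_limsup).trans (hup x hx))
  have hxbar : c xbar ∈ edom g := by
    by_contra h
    have htop : g (c xbar) = ⊤ := not_lt_top_iff.1 h
    have hval := hmin x₀ hx₀
    rw [htop, EReal.coe_add_top, top_le_iff] at hval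
    exact (EReal.add_lt_top (EReal.coe_ne_top _) hx₀.ne).ne hval
  refine ⟨hxbar, fun x => ?_, hzK, tendsto_of_le_liminf_of_limsup_le hlow (hup xbar hxbar)⟩
  by_cases hx : c x ∈ edom g
  · exact hmin x hx
  · have htop : g (c x) = ⊤ := not_lt_top_iff.1 hx
    rw [htop, EReal.coe_add_top]
    exact le_top

theorem statement12 {n m : ℕ}
    (f : Euc n → ℝ) (c : Euc n → Euc m) (g : Euc m → EReal)
    (hf : ContDiff ℝ 2 f) (hc : ContDiff ℝ 2 c)
    (hgp : ProperFn g) (hglsc : LowerSemicontinuous g) (hgpb : ProxBounded g)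
    (hphi : ∃ r : ℝ, (⨅ x : Euc n, ((f x : EReal) + g (c x))) = (r : EReal))
    (A : ALMSeq n m f c g)
    (hε0 : Tendsto A.ε atTop (𝓝 0))
    (hglobal : ∀ k, ∀ x : Euc n,
      ALfun f c g (A.μ k) (A.x k) (A.yhat k) ≤
        ALfun f c g (A.μ k) x (A.yhat k) + (A.ε k : EReal))
    (hfeas : ∃ x : Euc n, c x ∈ edom g)
    (hdomcl : IsClosed (edom g)) :
    (∀ x : Euc n, c x ∈ edom g →
      limsup (fun k => (f (A.x k) : EReal) + g (A.z k)) atTop ≤ (f x : EReal) + g (c x)) ∧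
    (∀ (xbar : Euc n) (K : ℕ → ℕ), StrictMono K →
      Tendsto (fun k => A.x (K k)) atTop (𝓝 xbar) →
        c xbar ∈ edom g ∧
        (∀ x : Euc n, (f xbar : EReal) + g (c xbar) ≤ (f x : EReal) + g (c x)) ∧
        Tendsto (fun k => A.z (K k)) atTop (𝓝 (c xbar)) ∧
        Tendsto (fun k => (f (A.x (K k)) : EReal) + g (A.z (K k))) atTop
          (𝓝 ((f xbar : EReal) + g (c xbar)))) :=
  statement12_general f c g hf hc hglsc A hε0 hglobal hfeas

end Paper
end
end

section
/- Let x̄ ∈ ℝ^n be a strict local minimizer of problem (P), i.e., x̄ is feasible and there is a ball around x̄ on which φ(x) > φ(x̄) for every feasible x ≠ x̄. Then there exists r > 0 such that: whenever {x^k} is a sequence with ‖x^k − x̄‖ ≤ r for all k and {z^k} ⊆ dom g is a sequence with ‖c(x^k) − z^k‖ → 0 and limsup_{k→∞} ( f(x^k) + g(z^k) ) ≤ φ(x̄), then x^k → x̄ and z^k → c(x̄). -/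
open Filter Topology Bornology

noncomputable section

/-!
Compactness of the ball gives a cluster point `x` of `xᵏ`; since `c(xᵏ) - zᵏ → 0`,
`(x, c x)` is a cluster point of `(xᵏ, zᵏ)`, and lower semicontinuity of
`(x, z) ↦ f x + g z` bounds `φ(x)` by the limsup, hence by `φ(x̄)`. Strictness of the
minimizer then forces `x = x̄`, so the whole sequence converges.
-/

section Semicontinuity

variable {α β : Type*} [TopologicalSpace α]

theorem LowerSemicontinuous.coe_add {f : α → ℝ} {g : α → EReal} (hf : Continuous f)
    (hg : LowerSemicontinuous g) : LowerSemicontinuous fun x => (f x : EReal) + g x :=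
  (continuous_coe_real_ereal.comp hf).lowerSemicontinuous.add' hg fun _ =>
    EReal.continuousAt_add (Or.inl (EReal.coe_ne_top _)) (Or.inl (EReal.coe_ne_bot _))

theorem LowerSemicontinuous.le_limsup_of_mapClusterPt {γ : Type*} [CompleteLinearOrder γ]
    [DenselyOrdered γ] {F : α → γ} (hF : LowerSemicontinuous F) {l : Filter β} {u : β → α}
    {p : α} (hp : MapClusterPt p l u) : F p ≤ limsup (F ∘ u) l :=
  le_of_forall_lt_imp_le_of_dense fun _ ht =>
    le_limsup_of_frequently_le' ((hp.frequently (hF p _ ht)).mono fun _ hk => hk.le)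

theorem MapClusterPt.prodMk_of_tendsto_sub {F : Type*} [AddCommGroup F] [TopologicalSpace F]
    [IsTopologicalAddGroup F] {l : Filter β} {u : β → α} {v : β → F} {x : α} {c : α → F}
    (hx : MapClusterPt x l u) (hc : ContinuousAt c x)
    (hv : Tendsto (fun k => v k - c (u k)) l (𝓝 0)) :
    MapClusterPt (x, c x) l fun k => (u k, v k) := by
  obtain ⟨U, hUl, hUx⟩ := mapClusterPt_iff_ultrafilter.1 hx
  have hvU : Tendsto v U (𝓝 (c x)) := by
    simpa using (hc.tendsto.comp hUx).add (hv.mono_left hUl)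
  exact mapClusterPt_iff_ultrafilter.2 ⟨U, hUl, hUx.prodMk_nhds hvU⟩

end Semicontinuity

namespace Paper

theorem StrictLocalMin.exists_eq_of_le {n m : ℕ} {f : Euc n → ℝ} {c : Euc n → Euc m}
    {g : Euc m → EReal} {xbar : Euc n} (hmin : StrictLocalMin f c g xbar) :
    ∃ ρ : ℝ, 0 < ρ ∧ ∀ x : Euc n, ‖x - xbar‖ ≤ ρ →
      (f x : EReal) + g (c x) ≤ (f xbar : EReal) + g (c xbar) → x = xbar := by
  obtain ⟨hfeas, ρ, hρ, hstrict⟩ := hmin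
  refine ⟨ρ, hρ, fun x hx hle => ?_⟩
  have hfeas_x : c x ∈ edom g := by
    refine show g (c x) < ⊤ from lt_top_iff_ne_top.2 fun htop => ?_
    have := hle.trans_lt (EReal.add_lt_top (EReal.coe_ne_top _) hfeas.ne)
    simp [htop, EReal.add_top_of_ne_bot (EReal.coe_ne_bot _)] at this
  by_contra hne
  exact (hstrict x hx hfeas_x hne).not_ge hle

theorem statement14_general {n m : ℕ}
    (f : Euc n → ℝ) (c : Euc n → Euc m) (g : Euc m → EReal)
    (hf : ContDiff ℝ 2 f) (hc : ContDiff ℝ 2 c)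
    (hglsc : LowerSemicontinuous g)
    (xbar : Euc n) (hmin : StrictLocalMin f c g xbar) :
    ∃ r : ℝ, 0 < r ∧ ∀ (xs : ℕ → Euc n) (zs : ℕ → Euc m),
      (∀ k, ‖xs k - xbar‖ ≤ r) → (∀ k, zs k ∈ edom g) →
      Tendsto (fun k => ‖c (xs k) - zs k‖) atTop (𝓝 0) →
      limsup (fun k => (f (xs k) : EReal) + g (zs k)) atTop ≤ (f xbar : EReal) + g (c xbar) →
      Tendsto xs atTop (𝓝 xbar) ∧ Tendsto zs atTop (𝓝 (c xbar)) := by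
  obtain ⟨ρ, hρ, heq⟩ := hmin.exists_eq_of_le
  refine ⟨ρ, hρ, fun xs zs hball _ hgap hlimsup => ?_⟩
  have hgap' : Tendsto (fun k => zs k - c (xs k)) atTop (𝓝 0) :=
    tendsto_zero_iff_norm_tendsto_zero.2 (by simpa only [norm_sub_rev] using hgap)
  have hlsc : LowerSemicontinuous fun p : Euc n × Euc m => (f p.1 : EReal) + g p.2 :=
    .coe_add (hf.continuous.comp continuous_fst) (hglsc.comp continuous_snd)
  have hxs : Tendsto xs atTop (𝓝 xbar) := by
    refine (isCompact_closedBall xbar ρ).tendsto_nhds_of_unique_mapClusterPt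
      (.of_forall fun k => mem_closedBall_iff_norm.2 (hball k)) fun x hx hcluster => ?_
    refine heq x (mem_closedBall_iff_norm.1 hx) (le_trans ?_ hlimsup)
    exact hlsc.le_limsup_of_mapClusterPt
      (hcluster.prodMk_of_tendsto_sub hc.continuous.continuousAt hgap')
  refine ⟨hxs, ?_⟩
  simpa using ((hc.continuous.tendsto xbar).comp hxs).add hgap'

theorem statement14 {n m : ℕ}
    (f : Euc n → ℝ) (c : Euc n → Euc m) (g : Euc m → EReal)
    (hf : ContDiff ℝ 2 f) (hc : ContDiff ℝ 2 c)
    (hgp : ProperFn g) (hglsc : LowerSemicontinuous g) (hgpb : ProxBounded g)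
    (hphi : ∃ r : ℝ, (⨅ x : Euc n, ((f x : EReal) + g (c x))) = (r : EReal))
    (xbar : Euc n) (hmin : StrictLocalMin f c g xbar) :
    ∃ r : ℝ, 0 < r ∧ ∀ (xs : ℕ → Euc n) (zs : ℕ → Euc m),
      (∀ k, ‖xs k - xbar‖ ≤ r) → (∀ k, zs k ∈ edom g) →
      Tendsto (fun k => ‖c (xs k) - zs k‖) atTop (𝓝 0) →
      limsup (fun k => (f (xs k) : EReal) + g (zs k)) atTop ≤ (f xbar : EReal) + g (c xbar) →
      Tendsto xs atTop (𝓝 xbar) ∧ Tendsto zs atTop (𝓝 (c xbar)) :=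
  statement14_general f c g hf hc hglsc xbar hmin

end Paper
end
end

section
/- Let x̄ ∈ ℝ^n be a strict local minimizer of problem (P) and let Y ⊆ ℝ^m be bounded. Then there exists a radius r > 0 with the following property: whenever {ŷ^k} ⊆ Y, {μ_k} ⊂ (0, μ_g) with μ_k ↓ 0, {ε_k} ⊂ [0, ∞) with ε_k → 0, and for each k the point x^k lies in the closed ball B_r(x̄) and satisfies L_{μ_k}(x^k, ŷ^k) ≤ L_{μ_k}(x, ŷ^k) + ε_k for all x ∈ B_r(x̄), then x^k → x̄. -/
/-! Let `x₀` be a cluster point of the approximate minimizers `xᵏ` in the ball. Along a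
subsequence converging to `x₀`, the envelope values `g^{μₖ}(c(xᵏ) + μₖŷᵏ)` eventually exceed
any number below `g(c x₀)`: close to `c x₀` by lower semicontinuity of `g`, and far from it
because the weight `1/(2μₖ) → ∞` of the proximal term beats the quadratic lower bound given by
prox-boundedness. As `L_μ(·, y) ≤ φ` and the `xᵏ` are `εₖ`-minimal, this yields
`φ(x₀) ≤ φ(x̄)`, so `x₀ = x̄` by strictness; compactness of the ball then gives `xᵏ → x̄`. -/

open Filter Topology Bornology

noncomputable section

namespace Paper

variable {n m : ℕ}

theorem ALfun_le_add (f : Euc n → ℝ) (c : Euc n → Euc m) (g : Euc m → EReal) (μ : ℝ)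
    (x : Euc n) (y : Euc m) : ALfun f c g μ x y ≤ f x + g (c x) := by
  have hquad : ‖c x - (c x + μ • y)‖ ^ 2 / (2 * μ) = μ / 2 * ‖y‖ ^ 2 := by
    rw [sub_add_cancel_left, norm_neg, norm_smul, Real.norm_eq_abs, mul_pow, sq_abs]
    rcases eq_or_ne μ 0 with rfl | hμ
    · simp
    · field_simp
  have hmoreau : moreau g μ (c x + μ • y) ≤ g (c x) + ((μ / 2 * ‖y‖ ^ 2 : ℝ) : EReal) := by
    have h := iInf_le (fun z => g z + ((‖z - (c x + μ • y)‖ ^ 2 / (2 * μ) : ℝ) : EReal)) (c x)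
    rwa [hquad] at h
  calc ALfun f c g μ x y
      ≤ f x + (g (c x) + ((μ / 2 * ‖y‖ ^ 2 : ℝ) : EReal)) - ((μ / 2 * ‖y‖ ^ 2 : ℝ) : EReal) :=
        EReal.sub_le_sub (add_le_add_right hmoreau _) le_rfl
    _ = f x + g (c x) := by rw [← add_assoc, EReal.add_sub_cancel_right]

theorem coe_le_add_sq_norm_sub_div {E : Type*} [NormedAddCommGroup E] {g : E → EReal}
    {μ₀ b : ℝ} (hμ₀ : 0 < μ₀) (hb : ∀ z, (b : EReal) ≤ g z + ((‖z‖ ^ 2 / (2 * μ₀) : ℝ) : EReal))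
    (μ : ℝ) (z w : E) :
    ((b - ‖w‖ ^ 2 / μ₀ + ‖z - w‖ ^ 2 * ((2 * μ)⁻¹ - μ₀⁻¹) : ℝ) : EReal) ≤
      g z + ((‖z - w‖ ^ 2 / (2 * μ) : ℝ) : EReal) := by
  have hbz := hb z
  generalize g z = G at hbz ⊢
  induction G using EReal.rec with
  | bot => simp at hbz
  | top => simp
  | coe G =>
    norm_cast at hbz ⊢
    have hz : ‖z‖ ≤ ‖z - w‖ + ‖w‖ := norm_le_norm_sub_add z w
    have hsq : ‖z‖ ^ 2 / (2 * μ₀) ≤ (‖z - w‖ ^ 2 + ‖w‖ ^ 2) / μ₀ :=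
      calc ‖z‖ ^ 2 / (2 * μ₀) ≤ 2 * (‖z - w‖ ^ 2 + ‖w‖ ^ 2) / (2 * μ₀) := by
            gcongr
            nlinarith [norm_nonneg z, sq_nonneg (‖z - w‖ - ‖w‖)]
        _ = (‖z - w‖ ^ 2 + ‖w‖ ^ 2) / μ₀ := by field_simp
    rw [div_eq_mul_inv _ (2 * μ), add_div, div_eq_mul_inv (‖z - w‖ ^ 2)] at *
    linarith

theorem eventually_coe_le_moreau {g : Euc m → EReal} {z₀ : Euc m}
    (hg : LowerSemicontinuousAt g z₀) {μ₀ : ℝ} (hμ₀ : 0 < μ₀) (hgb : ProxBoundedWith g μ₀)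
    {a : ℝ} (ha : (a : EReal) < g z₀) :
    ∀ᶠ p : ℝ × Euc m in 𝓝[>] 0 ×ˢ 𝓝 z₀, (a : EReal) ≤ moreau g p.1 p.2 := by
  obtain ⟨b, hb⟩ := hgb
  obtain ⟨s, hs, hnear⟩ := Metric.eventually_nhds_iff.1 (hg a ha)
  set R := ‖z₀‖ + s / 2 with hR
  have hgrowth : Tendsto (fun μ : ℝ => (2 * μ)⁻¹ - μ₀⁻¹) (𝓝[>] 0) atTop := by
    simp only [mul_inv]
    exact tendsto_atTop_add_const_right _ _
      (tendsto_inv_nhdsGT_zero.const_mul_atTop (by norm_num))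
  have hsmall : ∀ᶠ μ in 𝓝[>] (0 : ℝ), 0 < μ ∧ 0 ≤ (2 * μ)⁻¹ - μ₀⁻¹ ∧
      a - b + R ^ 2 / μ₀ ≤ (s / 2) ^ 2 * ((2 * μ)⁻¹ - μ₀⁻¹) :=
    eventually_mem_nhdsWithin.and <| (hgrowth.eventually_ge_atTop 0).and
      ((hgrowth.const_mul_atTop (by positivity)).eventually_ge_atTop _)
  have hclose : ∀ᶠ w in 𝓝 z₀, dist w z₀ < s / 2 := Metric.ball_mem_nhds _ (by positivity)
  filter_upwards [hsmall.prod_mk hclose] with ⟨μ, w⟩ ⟨⟨hμ, ht, hbig⟩, hw⟩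
  dsimp only at *
  refine le_iInf fun z => ?_
  by_cases hz : ‖z - w‖ < s / 2
  · have hgz : (a : EReal) < g z := hnear <| by
      calc dist z z₀ ≤ dist z w + dist w z₀ := dist_triangle z w z₀
        _ < s := by rw [dist_eq_norm z w]; linarith
    exact le_add_of_le_of_nonneg hgz.le (EReal.coe_nonneg.2 (by positivity))
  · refine le_trans ?_ (coe_le_add_sq_norm_sub_div hμ₀ hb μ z w)
    rw [EReal.coe_le_coe_iff]
    have hwR : ‖w‖ ^ 2 / μ₀ ≤ R ^ 2 / μ₀ := by
      have : ‖w‖ ≤ R := by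
        have := norm_le_norm_add_norm_sub' w z₀
        rw [← dist_eq_norm] at this
        linarith
      gcongr
    have hzw : (s / 2) ^ 2 * ((2 * μ)⁻¹ - μ₀⁻¹) ≤ ‖z - w‖ ^ 2 * ((2 * μ)⁻¹ - μ₀⁻¹) := by
      gcongr
      linarith
    linarith

section Sequences

variable {ι : Type*} {l : Filter ι} {f : Euc n → ℝ} {c : Euc n → Euc m} {g : Euc m → EReal}
  {x₀ : Euc n} {μ₀ : ℝ} {x : ι → Euc n} {μ : ι → ℝ} {y : ι → Euc m}

theorem eventually_coe_lt_ALfun (hf : ContinuousAt f x₀) (hc : ContinuousAt c x₀)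
    (hg : LowerSemicontinuousAt g (c x₀)) (hμ₀ : 0 < μ₀) (hgb : ProxBoundedWith g μ₀)
    (hx : Tendsto x l (𝓝 x₀)) (hμ : Tendsto μ l (𝓝[>] 0))
    (hy : IsBoundedUnder (· ≤ ·) l fun i => ‖y i‖) {a : ℝ} (ha : (a : EReal) < f x₀ + g (c x₀)) :
    ∀ᶠ i in l, (a : EReal) < ALfun f c g (μ i) (x i) (y i) := by
  have hsub : ((a - f x₀ : ℝ) : EReal) < g (c x₀) := by
    rw [EReal.coe_sub]
    exact EReal.sub_lt_of_lt_add' ha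
  obtain ⟨a', ha'f, ha'g⟩ := EReal.exists_between_coe_real hsub
  rw [EReal.coe_lt_coe_iff] at ha'f
  have hμ0 : Tendsto μ l (𝓝 0) := tendsto_nhds_of_tendsto_nhdsWithin hμ
  have hw : Tendsto (fun i => c (x i) + μ i • y i) l (𝓝 (c x₀)) := by
    simpa using (hc.tendsto.comp hx).add (hμ0.zero_smul_isBoundedUnder_le hy)
  have hmoreau : ∀ᶠ i in l, (a' : EReal) ≤ moreau g (μ i) (c (x i) + μ i • y i) :=
    (hμ.prodMk hw).eventually (eventually_coe_le_moreau hg hμ₀ hgb ha'g)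
  have hpen : Tendsto (fun i => μ i / 2 * ‖y i‖ ^ 2) l (𝓝 0) := by
    have hy' : IsBoundedUnder (· ≤ ·) l (norm ∘ fun i => ‖y i‖) := by
      simpa [Function.comp_def] using hy
    simpa [div_mul_eq_mul_div, mul_assoc, sq] using
      ((hμ0.zero_mul_isBoundedUnder_le hy').zero_mul_isBoundedUnder_le hy').div_const 2
  have hlow : Tendsto (fun i => f (x i) + a' - μ i / 2 * ‖y i‖ ^ 2) l (𝓝 (f x₀ + a')) := by
    simpa using ((hf.tendsto.comp hx).add_const a').sub hpen
  filter_upwards [hmoreau, hlow.eventually (lt_mem_nhds (by linarith : a < f x₀ + a'))]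
    with i hi hai
  calc (a : EReal) < ((f (x i) + a' - μ i / 2 * ‖y i‖ ^ 2 : ℝ) : EReal) :=
        EReal.coe_lt_coe_iff.2 hai
    _ = f (x i) + (a' : EReal) - ((μ i / 2 * ‖y i‖ ^ 2 : ℝ) : EReal) := by push_cast; rfl
    _ ≤ ALfun f c g (μ i) (x i) (y i) := EReal.sub_le_sub (add_le_add_right hi _) le_rfl

theorem le_of_eventually_ALfun_le_add [l.NeBot] (hf : ContinuousAt f x₀) (hc : ContinuousAt c x₀)
    (hg : LowerSemicontinuousAt g (c x₀)) (hμ₀ : 0 < μ₀) (hgb : ProxBoundedWith g μ₀)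
    (hx : Tendsto x l (𝓝 x₀)) (hμ : Tendsto μ l (𝓝[>] 0))
    (hy : IsBoundedUnder (· ≤ ·) l fun i => ‖y i‖) {ε : ι → ℝ} (hε : Tendsto ε l (𝓝 0))
    {B : EReal} (hB : ∀ᶠ i in l, ALfun f c g (μ i) (x i) (y i) ≤ B + ε i) :
    f x₀ + g (c x₀) ≤ B := by
  by_contra! hlt
  obtain ⟨B', hBB', hB'⟩ := EReal.exists_between_coe_real hlt
  obtain ⟨a, hB'a, ha⟩ := EReal.exists_between_coe_real hB'
  rw [EReal.coe_lt_coe_iff] at hB'a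
  obtain ⟨i, hai, hBi, hεi⟩ := ((eventually_coe_lt_ALfun hf hc hg hμ₀ hgb hx hμ hy ha).and
    (hB.and (hε.eventually (gt_mem_nhds (sub_pos.2 hB'a))))).exists
  have : (a : EReal) < ((B' + ε i : ℝ) : EReal) :=
    calc (a : EReal) < B + ε i := hai.trans_le hBi
      _ ≤ B' + ε i := add_le_add_left hBB'.le _
  exact absurd (EReal.coe_lt_coe_iff.1 this) (by linarith)

end Sequences

theorem statement15_general {n m : ℕ}
    (f : Euc n → ℝ) (c : Euc n → Euc m) (g : Euc m → EReal)
    (hf : ContDiff ℝ 2 f) (hc : ContDiff ℝ 2 c)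
    (hglsc : LowerSemicontinuous g) (hgpb : ProxBounded g)
    (xbar : Euc n) (hmin : StrictLocalMin f c g xbar)
    (Y : Set (Euc m)) (hYbdd : IsBounded Y) :
    ∃ r : ℝ, 0 < r ∧ ∀ (yhat : ℕ → Euc m) (μ ε : ℕ → ℝ) (xs : ℕ → Euc n),
      (∀ k, yhat k ∈ Y) →
      (∀ k, BelowThreshold g (μ k)) → Antitone μ → Tendsto μ atTop (𝓝 0) →
      (∀ k, 0 ≤ ε k) → Tendsto ε atTop (𝓝 0) →
      (∀ k, ‖xs k - xbar‖ ≤ r) →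
      (∀ k, ∀ x : Euc n, ‖x - xbar‖ ≤ r →
        ALfun f c g (μ k) (xs k) (yhat k) ≤ ALfun f c g (μ k) x (yhat k) + (ε k : EReal)) →
      Tendsto xs atTop (𝓝 xbar) := by
  obtain ⟨hdom, ρ, hρ, hstrict⟩ := hmin
  obtain ⟨μ₀, hμ₀, hgb⟩ := hgpb
  obtain ⟨C, hC⟩ := hYbdd.exists_norm_le
  refine ⟨ρ, hρ, fun yhat μ ε xs hyhat hμ _ hμ0 _ hε hxs hxsmin => ?_⟩
  have hμ' : Tendsto μ atTop (𝓝[>] 0) :=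
    tendsto_nhdsWithin_iff.2 ⟨hμ0, .of_forall fun k => (hμ k).1⟩
  have hub : ∀ k, ALfun f c g (μ k) (xs k) (yhat k) ≤ f xbar + g (c xbar) + ε k := fun k =>
    (hxsmin k xbar (by simpa using hρ.le)).trans (add_le_add_left (ALfun_le_add ..) _)
  refine (isCompact_closedBall xbar ρ).tendsto_nhds_of_unique_mapClusterPt
    (.of_forall fun k => mem_closedBall_iff_norm.2 (hxs k)) fun x₀ hx₀ hclust => ?_
  obtain ⟨ψ, hψ, hlim⟩ := hclust.tendsto_subseq
  have hle : f x₀ + g (c x₀) ≤ f xbar + g (c xbar) :=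
    le_of_eventually_ALfun_le_add hf.continuous.continuousAt hc.continuous.continuousAt
      (hglsc _) hμ₀ hgb hlim (hμ'.comp hψ.tendsto_atTop)
      (isBoundedUnder_of ⟨C, fun k => hC _ (hyhat (ψ k))⟩) (hε.comp hψ.tendsto_atTop)
      (.of_forall fun k => hub (ψ k))
  by_contra hne
  have hfeas : c x₀ ∈ edom g := by
    refine lt_top_iff_ne_top.2 fun htop : g (c x₀) = ⊤ => ?_
    rw [htop, EReal.coe_add_top, top_le_iff] at hle
    exact (EReal.add_lt_top (EReal.coe_ne_top _) hdom.ne).ne hle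
  exact (hstrict x₀ (mem_closedBall_iff_norm.1 hx₀) hfeas hne).not_ge hle

theorem statement15 {n m : ℕ}
    (f : Euc n → ℝ) (c : Euc n → Euc m) (g : Euc m → EReal)
    (hf : ContDiff ℝ 2 f) (hc : ContDiff ℝ 2 c)
    (hgp : ProperFn g) (hglsc : LowerSemicontinuous g) (hgpb : ProxBounded g)
    (hphi : ∃ r : ℝ, (⨅ x : Euc n, ((f x : EReal) + g (c x))) = (r : EReal))
    (xbar : Euc n) (hmin : StrictLocalMin f c g xbar)
    (Y : Set (Euc m)) (hYbdd : IsBounded Y) :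
    ∃ r : ℝ, 0 < r ∧ ∀ (yhat : ℕ → Euc m) (μ ε : ℕ → ℝ) (xs : ℕ → Euc n),
      (∀ k, yhat k ∈ Y) →
      (∀ k, BelowThreshold g (μ k)) → Antitone μ → Tendsto μ atTop (𝓝 0) →
      (∀ k, 0 ≤ ε k) → Tendsto ε atTop (𝓝 0) →
      (∀ k, ‖xs k - xbar‖ ≤ r) →
      (∀ k, ∀ x : Euc n, ‖x - xbar‖ ≤ r →
        ALfun f c g (μ k) (xs k) (yhat k) ≤ ALfun f c g (μ k) x (yhat k) + (ε k : EReal)) →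
      Tendsto xs atTop (𝓝 xbar) :=
  statement15_general f c g hf hc hglsc hgpb xbar hmin Y hYbdd

end Paper
end
end

section
/- Let x̄ ∈ ℝ^n be an M-stationary point of problem (P) and let ȳ ∈ Λ(x̄) be arbitrary. Let {(x^k, z^k, y^k)} be generated by the safeguarded implicit augmented Lagrangian algorithm with ε_k → 0 and with ŷ^k = y^{k−1} for all sufficiently large k. Then there exist a constant ρ_l > 0 and a neighborhood U of (x̄, c(x̄), ȳ) such that for every index k with (x^k, z^k, y^k) ∈ U: ρ_l · Θ(x^k, z^k, y^k) ≤ ‖x^k − x̄‖ + ‖z^k − c(x̄)‖ + ‖y^k − ȳ‖. -/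
open Filter Topology Bornology

noncomputable section

namespace Paper

variable {n m : ℕ}

/-! The prox step makes `y^k` a regular, hence limiting, subgradient of `g` at `z^k`, so the
distance term of `Θ` vanishes along the iterates. The two remaining terms, `‖∇ₓL(x, y)‖` and
`‖c(x) − z‖`, vanish at `(x̄, c(x̄), ȳ)` and come from maps differentiable there, so they are
`O(‖x − x̄‖ + ‖z − c(x̄)‖ + ‖y − ȳ‖)`. -/

open Asymptotics

theorem mem_regSubdiff_of_quadratic_minorant {g : Euc m → EReal} {zbar v : Euc m} {a K : ℝ}
    (ha : g zbar = a)
    (hmin : ∀ w, ((a + inner ℝ v (w - zbar) - K * ‖w - zbar‖ ^ 2 : ℝ) : EReal) ≤ g w) :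
    v ∈ regSubdiff g zbar := by
  set q : Euc m → EReal := fun w =>
    (g w - g zbar - ((inner ℝ v (w - zbar) : ℝ) : EReal)) / ((‖w - zbar‖ : ℝ) : EReal)
  have hq : ∀ w ≠ zbar, ((-(K * ‖w - zbar‖) : ℝ) : EReal) ≤ q w := by
    intro w hw
    have hd : 0 < ‖w - zbar‖ := norm_pos_iff.2 (sub_ne_zero.2 hw)
    have hnum : ((-(K * ‖w - zbar‖ ^ 2) : ℝ) : EReal) ≤
        g w - g zbar - ((inner ℝ v (w - zbar) : ℝ) : EReal) := by
      rw [ha, EReal.le_sub_iff_add_le (by simp) (by simp),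
        EReal.le_sub_iff_add_le (by simp) (by simp), ← EReal.coe_add, ← EReal.coe_add]
      convert hmin w using 2
      ring
    calc ((-(K * ‖w - zbar‖) : ℝ) : EReal)
        = ((-(K * ‖w - zbar‖ ^ 2) : ℝ) : EReal) / ((‖w - zbar‖ : ℝ) : EReal) := by
          rw [← EReal.coe_div]
          congr 1
          field_simp
      _ ≤ q w := EReal.div_le_div_right_of_nonneg (EReal.coe_nonneg.2 hd.le) hnum
  show 0 ≤ liminf q (𝓝[≠] zbar)
  rcases (𝓝[≠] zbar).eq_or_neBot with hbot | hne
  · simp [hbot]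
  have hlim : Tendsto (fun w : Euc m => ((-(K * ‖w - zbar‖) : ℝ) : EReal)) (𝓝[≠] zbar)
      (𝓝 0) := by
    have h : Tendsto (fun w : Euc m => -(K * ‖w - zbar‖)) (𝓝 zbar) (𝓝 0) :=
      ((continuous_id.sub continuous_const).norm.const_mul K).neg.tendsto' zbar 0 (by simp)
    exact (continuous_coe_real_ereal.tendsto' 0 0 rfl).comp (h.mono_left nhdsWithin_le_nhds)
  rw [← hlim.liminf_eq]
  exact liminf_le_liminf (eventually_nhdsWithin_of_forall hq)

theorem mem_regSubdiff_of_prox {g : Euc m → EReal} (hg : ProperFn g) {μ : ℝ} (hμ : 0 < μ)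
    {w₀ zbar : Euc m}
    (hprox : ∀ w, g zbar + ((‖zbar - w₀‖ ^ 2 / (2 * μ) : ℝ) : EReal) ≤
      g w + ((‖w - w₀‖ ^ 2 / (2 * μ) : ℝ) : EReal)) :
    μ⁻¹ • (w₀ - zbar) ∈ regSubdiff g zbar := by
  obtain ⟨hne_bot, z₀, hz₀⟩ := hg
  have hne_top : g zbar ≠ ⊤ := by
    intro htop
    have h := hprox z₀
    rw [htop, EReal.top_add_coe, top_le_iff] at h
    exact EReal.add_lt_top hz₀.ne (EReal.coe_ne_top _) |>.ne h
  refine mem_regSubdiff_of_quadratic_minorant (K := (2 * μ)⁻¹)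
    (EReal.coe_toReal hne_top (hne_bot zbar)).symm fun w => ?_
  have h := hprox w
  rw [← EReal.coe_toReal hne_top (hne_bot zbar), ← EReal.coe_add,
    ← EReal.sub_le_iff_le_add (by simp) (by simp), ← EReal.coe_sub] at h
  convert h using 2
  have hexpand : ‖w - w₀‖ ^ 2 =
      ‖w - zbar‖ ^ 2 - 2 * inner ℝ (w - zbar) (w₀ - zbar) + ‖w₀ - zbar‖ ^ 2 := by
    rw [← norm_sub_sq_real, sub_sub_sub_cancel_right]
  rw [hexpand, norm_sub_rev zbar w₀, real_inner_smul_left, real_inner_comm]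
  field_simp
  ring

theorem mem_limSubdiff_of_mem_regSubdiff {g : Euc m → EReal} {z v : Euc m}
    (hv : v ∈ regSubdiff g z) : v ∈ limSubdiff g z :=
  ⟨fun _ => z, fun _ => v, tendsto_const_nhds, tendsto_const_nhds, tendsto_const_nhds,
    fun _ => hv⟩

theorem Theta_eq_of_mem_limSubdiff {f : Euc n → ℝ} {c : Euc n → Euc m} {g : Euc m → EReal}
    {x : Euc n} {z y : Euc m} (hy : y ∈ limSubdiff g z) :
    Theta f c g x z y = ((‖fderiv ℝ (LagFn f c y) x‖ + ‖c x - z‖ : ℝ) : EReal) := by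
  have hdist : ⨅ v ∈ limSubdiff g z, ((‖y - v‖ : ℝ) : EReal) = 0 :=
    le_antisymm ((iInf₂_le y hy).trans (by simp))
      (le_iInf₂ fun v _ => EReal.coe_nonneg.2 (norm_nonneg _))
  rw [Theta, hdist, add_zero]

theorem ALMSeq.y_mem_regSubdiff {f : Euc n → ℝ} {c : Euc n → Euc m} {g : Euc m → EReal}
    (A : ALMSeq n m f c g) (hg : ProperFn g) (k : ℕ) : A.y k ∈ regSubdiff g (A.z k) := by
  have hμ : 0 < A.μ k := (A.hμthr k).1
  have hy : A.y k = (A.μ k)⁻¹ • ((c (A.x k) + A.μ k • A.yhat k) - A.z k) := by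
    rw [A.hy k, add_sub_right_comm, smul_add, inv_smul_smul₀ hμ.ne', add_comm]
  rw [hy]
  exact mem_regSubdiff_of_prox hg hμ (A.hprox k)

theorem fderiv_LagFn {f : Euc n → ℝ} {c : Euc n → Euc m} {x : Euc n} (y : Euc m)
    (hf : DifferentiableAt ℝ f x) (hc : DifferentiableAt ℝ c x) :
    fderiv ℝ (LagFn f c y) x = fderiv ℝ f x + (innerSL ℝ y).comp (fderiv ℝ c x) :=
  (hf.hasFDerivAt.add ((innerSL ℝ y).hasFDerivAt.comp x hc.hasFDerivAt)).fderiv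

theorem isBigO_fderiv_LagFn {f : Euc n → ℝ} {c : Euc n → Euc m} {xbar : Euc n} {ybar : Euc m}
    (hf : ContDiff ℝ 2 f) (hc : ContDiff ℝ 2 c) (hbar : gradLagZero f c xbar ybar) :
    (fun p : Euc n × Euc m => fderiv ℝ (LagFn f c p.2) p.1) =O[𝓝 (xbar, ybar)]
      fun p => p - (xbar, ybar) := by
  have hf1 : Differentiable ℝ f := hf.differentiable two_ne_zero
  have hc1 : Differentiable ℝ c := hc.differentiable two_ne_zero
  have hdiff : DifferentiableAt ℝ
      (fun p : Euc n × Euc m => fderiv ℝ f p.1 + (innerSL ℝ p.2).comp (fderiv ℝ c p.1))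
      (xbar, ybar) := by
    have hf2 : Differentiable ℝ (fderiv ℝ f) := (hf.fderiv_right le_rfl).differentiable one_ne_zero
    have hc2 : Differentiable ℝ (fderiv ℝ c) := (hc.fderiv_right le_rfl).differentiable one_ne_zero
    exact ((hf2.comp differentiable_fst).add ((((innerSL ℝ).differentiable).comp
      differentiable_snd).clm_comp (hc2.comp differentiable_fst))) (xbar, ybar)
  have hformula : (fun p : Euc n × Euc m => fderiv ℝ (LagFn f c p.2) p.1) =
      fun p => (fderiv ℝ f p.1 + (innerSL ℝ p.2).comp (fderiv ℝ c p.1)) -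
        (fderiv ℝ f xbar + (innerSL ℝ ybar).comp (fderiv ℝ c xbar)) := by
    ext1 p
    rw [← fderiv_LagFn ybar (hf1 xbar) (hc1 xbar), ← fderiv_LagFn p.2 (hf1 p.1) (hc1 p.1),
      show fderiv ℝ (LagFn f c ybar) xbar = 0 from hbar, sub_zero]
  rw [hformula]
  exact hdiff.isBigO_sub

theorem isBigO_stationarityResidual {f : Euc n → ℝ} {c : Euc n → Euc m} {xbar : Euc n}
    {ybar : Euc m} (hf : ContDiff ℝ 2 f) (hc : ContDiff ℝ 2 c)
    (hbar : gradLagZero f c xbar ybar) :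
    (fun p : Euc n × Euc m × Euc m => ‖fderiv ℝ (LagFn f c p.2.2) p.1‖ + ‖c p.1 - p.2.1‖)
      =O[𝓝 (xbar, c xbar, ybar)]
      fun p => ‖p.1 - xbar‖ + ‖p.2.1 - c xbar‖ + ‖p.2.2 - ybar‖ := by
  set pbar : Euc n × Euc m × Euc m := (xbar, c xbar, ybar)
  set dist₃ : Euc n × Euc m × Euc m → ℝ :=
    fun p => ‖p.1 - xbar‖ + ‖p.2.1 - c xbar‖ + ‖p.2.2 - ybar‖
  have hdist₃ : ∀ p, ‖dist₃ p‖ = dist₃ p := fun p => Real.norm_of_nonneg (by positivity)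
  have hx : (fun p : Euc n × Euc m × Euc m => p.1 - xbar) =O[𝓝 pbar] dist₃ :=
    isBigO_of_le _ fun p => by
      rw [hdist₃]
      linarith [norm_nonneg (p.2.1 - c xbar), norm_nonneg (p.2.2 - ybar)]
  have hz : (fun p : Euc n × Euc m × Euc m => p.2.1 - c xbar) =O[𝓝 pbar] dist₃ :=
    isBigO_of_le _ fun p => by
      rw [hdist₃]
      linarith [norm_nonneg (p.1 - xbar), norm_nonneg (p.2.2 - ybar)]
  have hxy : (fun p : Euc n × Euc m × Euc m => (p.1, p.2.2) - (xbar, ybar)) =O[𝓝 pbar] dist₃ :=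
    isBigO_of_le _ fun p => by
      rw [hdist₃, Prod.norm_def, Prod.mk_sub_mk]
      exact max_le (by linarith [norm_nonneg (p.2.1 - c xbar), norm_nonneg (p.2.2 - ybar)])
        (by linarith [norm_nonneg (p.1 - xbar), norm_nonneg (p.2.1 - c xbar)])
  have hgrad : (fun p : Euc n × Euc m × Euc m => fderiv ℝ (LagFn f c p.2.2) p.1)
      =O[𝓝 pbar] dist₃ :=
    ((isBigO_fderiv_LagFn hf hc hbar).comp_tendsto
      ((continuous_fst.prodMk (continuous_snd.comp continuous_snd)).tendsto' pbar _ rfl)).trans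
      hxy
  have hc_sub : (fun p : Euc n × Euc m × Euc m => c p.1 - c xbar) =O[𝓝 pbar] dist₃ :=
    (((hc.differentiable two_ne_zero) xbar).isBigO_sub.comp_tendsto
      (continuous_fst.tendsto' pbar xbar rfl)).trans hx
  have hfeas : (fun p : Euc n × Euc m × Euc m => c p.1 - p.2.1) =O[𝓝 pbar] dist₃ := by
    simpa only [sub_sub_sub_cancel_right] using hc_sub.sub hz
  exact hgrad.norm_left.add hfeas.norm_left

theorem statement17_general {n m : ℕ}
    (f : Euc n → ℝ) (c : Euc n → Euc m) (g : Euc m → EReal)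
    (hf : ContDiff ℝ 2 f) (hc : ContDiff ℝ 2 c)
    (hgp : ProperFn g)
    (xbar : Euc n) (ybar : Euc m) (hybar : ybar ∈ Lambda f c g xbar)
    (A : ALMSeq n m f c g) :
    ∃ ρl : ℝ, 0 < ρl ∧ ∃ U ∈ 𝓝 ((xbar, c xbar, ybar) : Euc n × Euc m × Euc m),
      ∀ k, (A.x k, A.z k, A.y k) ∈ U →
        (ρl : EReal) * Theta f c g (A.x k) (A.z k) (A.y k) ≤
          ((‖A.x k - xbar‖ + ‖A.z k - c xbar‖ + ‖A.y k - ybar‖ : ℝ) : EReal) := by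
  obtain ⟨C, hC, hresidual⟩ := (isBigO_stationarityResidual hf hc hybar.1).exists_pos
  refine ⟨C⁻¹, inv_pos.2 hC, _, hresidual.bound, fun k hk => ?_⟩
  rw [Set.mem_ofPred_eq, Real.norm_of_nonneg (by positivity),
    Real.norm_of_nonneg (by positivity)] at hk
  rw [Theta_eq_of_mem_limSubdiff (mem_limSubdiff_of_mem_regSubdiff (A.y_mem_regSubdiff hgp k)),
    ← EReal.coe_mul, EReal.coe_le_coe_iff, inv_mul_le_iff₀ hC]
  exact hk

theorem statement17 {n m : ℕ}
    (f : Euc n → ℝ) (c : Euc n → Euc m) (g : Euc m → EReal)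
    (hf : ContDiff ℝ 2 f) (hc : ContDiff ℝ 2 c)
    (hgp : ProperFn g) (hglsc : LowerSemicontinuous g) (hgpb : ProxBounded g)
    (hphi : ∃ r : ℝ, (⨅ x : Euc n, ((f x : EReal) + g (c x))) = (r : EReal))
    (xbar : Euc n) (ybar : Euc m) (hybar : ybar ∈ Lambda f c g xbar)
    (A : ALMSeq n m f c g)
    (hε0 : Tendsto A.ε atTop (𝓝 0))
    (hyh : ∀ᶠ k in atTop, A.yhat (k + 1) = A.y k) :
    ∃ ρl : ℝ, 0 < ρl ∧ ∃ U ∈ 𝓝 ((xbar, c xbar, ybar) : Euc n × Euc m × Euc m),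
      ∀ k, (A.x k, A.z k, A.y k) ∈ U →
        (ρl : EReal) * Theta f c g (A.x k) (A.z k) (A.y k) ≤
          ((‖A.x k - xbar‖ + ‖A.z k - c xbar‖ + ‖A.y k - ybar‖ : ℝ) : EReal) :=
  statement17_general f c g hf hc hgp xbar ybar hybar A

end Paper
end
end
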